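/- For each j ∈ ℤ and each positive integer q, we have t_{n-1,j+q+1} · (x_{j+2} x_{j+3} ⋯ x_{j+q+1}) + u_j t_{n-1,j} t_{q-1,j+1} = t_{n-1,j+1} t_{q,j}. -/

import Mathlib

/- Setting: a semifield `K` (commutative associative addition `add`, multiplicative
abelian group, distributivity), with `u, x : ℤ → K` being `n`-periodic families. -/

variable {K : Type*} [CommGroup K]

/-- The nonempty sum `f 0 + f 1 + ⋯ + f r` with respect to the binary operation `add`. -/
def addSum (add : K → K → K) (f : ℕ → K) : ℕ → K
  | 0 => f 0
  | r + 1 => add (addSum add f r) (f (r + 1))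

/-- The element `t_{r,j} = Σ_{k=0}^{r} (∏_{i=1}^{k} x_{j+i}) · (∏_{i=k+1}^{r} u_{j+i})`. -/
def tpoly (add : K → K → K) (u x : ℤ → K) (r : ℕ) (j : ℤ) : K :=
  addSum add
    (fun k => (∏ i ∈ Finset.Icc 1 k, x (j + i)) * ∏ i ∈ Finset.Icc (k + 1) r, u (j + i)) r

/-!
Write `T j = t_{n-1,j}`. By periodicity, `u_j T_j` and `x_{j+1} T_{j+1}` are both the sum
`t_{n,j}` with one extreme monomial removed (the all-`x`, resp. the all-`u` one), and the
extreme monomials `∏ x`, `∏ u` over a full period do not depend on `j`. Since `K` has no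
subtraction, this is used in the form of the exchange relation
`x_{m+1} T_{m+1} + u_j T_j = u_m T_m + x_{j+1} T_{j+1}`, where both sides are the same sum of
two extreme monomials and two middle parts. The identity then follows by induction on `q`,
splitting off the top summand of `t_{q,j}` and applying the exchange relation once per step.
-/

open Finset Function

theorem addSum_congr {α : Type*} {add : α → α → α} {f g : ℕ → α} {r : ℕ}
    (h : ∀ k ≤ r, f k = g k) : addSum add f r = addSum add g r := by
  induction r with
  | zero => exact h 0 le_rfl
  | succ r ih => rw [addSum, addSum, ih fun k hk => h k (by omega), h (r + 1) le_rfl]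

theorem mul_addSum {α : Type*} [Mul α] [Add α] [LeftDistribClass α] (c : α) (f : ℕ → α)
    (r : ℕ) : c * addSum (· + ·) f r = addSum (· + ·) (fun k => c * f k) r := by
  induction r with
  | zero => rfl
  | succ r ih => rw [addSum, addSum, mul_add, ih]

theorem addSum_succ' {α : Type*} [AddSemigroup α] (f : ℕ → α) (r : ℕ) :
    addSum (· + ·) f (r + 1) = f 0 + addSum (· + ·) (fun k => f (k + 1)) r := by
  induction r with
  | zero => rfl
  | succ r ih => rw [addSum, ih, add_assoc]; rfl

theorem prod_Icc_add_one_add_one {M : Type*} [CommMonoid M] (f : ℤ → M) (j : ℤ) (a b : ℕ) :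
    ∏ i ∈ Icc (a + 1) (b + 1), f (j + i) = ∏ i ∈ Icc a b, f (j + 1 + i) := by
  rw [← map_add_right_Icc a b 1, prod_map]
  refine prod_congr rfl fun i _ => ?_
  simp only [addRightEmbedding_apply]
  push_cast
  ring_nf

theorem prod_Icc_one_succ {M : Type*} [CommMonoid M] (f : ℤ → M) (j : ℤ) (k : ℕ) :
    ∏ i ∈ Icc 1 (k + 1), f (j + i) = f (j + 1) * ∏ i ∈ Icc 1 k, f (j + 1 + i) := by
  rw [← insert_Icc_add_one_left_eq_Icc (by omega), prod_insert (by simp),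
    prod_Icc_add_one_add_one, Nat.cast_one]

theorem Function.Periodic.prod_Icc_one_add_eq {M : Type*} [CommMonoid M] {f : ℤ → M} {n : ℕ}
    (hf : Periodic f n) (j m : ℤ) :
    ∏ i ∈ Icc 1 n, f (j + i) = ∏ i ∈ Icc 1 n, f (m + i) := by
  let g : ℤ → M := fun j => ∏ i ∈ Icc 1 n, f (j + i)
  have hg : Periodic g 1 := fun j => by
    cases n with
    | zero => rfl
    | succ s =>
      simp only [g]
      rw [prod_Icc_succ_top (by omega) (fun i : ℕ => f (j + 1 + i)), prod_Icc_one_succ, hf,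
        mul_comm]
  simpa using (hg.int_mul_eq j).trans (hg.int_mul_eq m).symm

theorem tpoly_zero (add : K → K → K) (u x : ℤ → K) (j : ℤ) : tpoly add u x 0 j = 1 := by
  simp [tpoly, addSum]

theorem tpoly_succ [Add K] [LeftDistribClass K] (u x : ℤ → K) (r : ℕ) (j : ℤ) :
    tpoly (· + ·) u x (r + 1) j =
      u (j + (r + 1 : ℕ)) * tpoly (· + ·) u x r j + ∏ i ∈ Icc 1 (r + 1), x (j + i) := by
  rw [tpoly, addSum, tpoly, mul_addSum, Icc_eq_empty (a := r + 1 + 1) (by omega), prod_empty,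
    mul_one]
  congr 1
  refine addSum_congr fun k hk => ?_
  rw [prod_Icc_succ_top (by omega) (fun i : ℕ => u (j + i))]
  ac_rfl

theorem tpoly_succ' [AddSemigroup K] [LeftDistribClass K] (u x : ℤ → K) (r : ℕ) (j : ℤ) :
    tpoly (· + ·) u x (r + 1) j =
      ∏ i ∈ Icc 1 (r + 1), u (j + i) + x (j + 1) * tpoly (· + ·) u x r (j + 1) := by
  rw [tpoly, addSum_succ', tpoly, mul_addSum, Icc_eq_empty (b := 0) (by omega), prod_empty,
    one_mul]
  congr 1
  refine addSum_congr fun k _ => ?_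
  rw [prod_Icc_one_succ, prod_Icc_add_one_add_one, mul_assoc]

theorem tpoly_exchange [AddCommSemigroup K] [LeftDistribClass K] {n : ℕ} (hn : 0 < n)
    {u x : ℤ → K} (hu : Periodic u n) (hx : Periodic x n) (j m : ℤ) :
    x (m + 1) * tpoly (· + ·) u x (n - 1) (m + 1) + u j * tpoly (· + ·) u x (n - 1) j =
      u m * tpoly (· + ·) u x (n - 1) m + x (j + 1) * tpoly (· + ·) u x (n - 1) (j + 1) := by
  obtain ⟨s, rfl⟩ : ∃ s, n = s + 1 := ⟨n - 1, by omega⟩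
  rw [Nat.add_sub_cancel]
  cases s with
  | zero =>
    have hu_const : ∀ a, u a = u 0 := fun a => by simpa using hu.int_mul_eq a
    have hx_const : ∀ a, x a = x 0 := fun a => by simpa using hx.int_mul_eq a
    simp only [tpoly_zero, mul_one]
    rw [hu_const j, hu_const m, hx_const (m + 1), hx_const (j + 1), add_comm]
  | succ s =>
    set M : ℤ → K := fun j => u j * (x (j + 1) * tpoly (· + ·) u x s (j + 1))
    have hU : ∀ j, u j * tpoly (· + ·) u x (s + 1) j =
        ∏ i ∈ Icc 1 (s + 1 + 1), u (j + i) + M j := by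
      intro j
      rw [tpoly_succ', mul_add, prod_Icc_succ_top (b := s + 1) (by omega)
        (fun i : ℕ => u (j + i)), hu, mul_comm]
    have hX : ∀ j, x (j + 1) * tpoly (· + ·) u x (s + 1) (j + 1) =
        M j + ∏ i ∈ Icc 1 (s + 1 + 1), x (j + i) := by
      intro j
      rw [tpoly_succ, mul_add, prod_Icc_one_succ x j (s + 1),
        show j + 1 + ((s + 1 : ℕ) : ℤ) = j + ((s + 1 + 1 : ℕ) : ℤ) by push_cast; ring, hu,
        mul_left_comm]
    rw [hU, hU, hX, hX, hu.prod_Icc_one_add_eq j m, hx.prod_Icc_one_add_eq m j]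
    ac_rfl

theorem tpoly_pluecker_of_periodic [AddCommSemigroup K] [LeftDistribClass K] {n : ℕ}
    (hn : 0 < n) {u x : ℤ → K} (hu : Periodic u n) (hx : Periodic x n) (j : ℤ) (q : ℕ) :
    tpoly (· + ·) u x (n - 1) (j + (q + 1 : ℕ) + 1) * ∏ i ∈ Icc 2 (q + 1 + 1), x (j + i) +
        u j * tpoly (· + ·) u x (n - 1) j * tpoly (· + ·) u x q (j + 1) =
      tpoly (· + ·) u x (n - 1) (j + 1) * tpoly (· + ·) u x (q + 1) j := by
  have hex := tpoly_exchange hn hu hx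
  set T := tpoly (· + ·) u x (n - 1)
  induction q with
  | zero =>
    rw [tpoly_zero, mul_one, tpoly_succ, tpoly_zero, mul_one, mul_add]
    simpa [add_assoc, mul_comm] using hex j (j + 1)
  | succ q ih =>
    set m := j + ((q + 1 : ℕ) : ℤ) + 1
    set Y := ∏ i ∈ Icc 2 (q + 1 + 1), x (j + i)
    have hm : j + ((q + 1 + 1 : ℕ) : ℤ) + 1 = m + 1 := by simp only [m]; push_cast; ring
    have hY_succ : ∏ i ∈ Icc 2 (q + 1 + 1 + 1), x (j + i) = Y * x (m + 1) := by
      rw [prod_Icc_succ_top (by omega) (fun i : ℕ => x (j + i)), ← hm]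
      congr 2; push_cast; ring
    have hY_shift : ∏ i ∈ Icc 1 (q + 1), x (j + 1 + i) = Y :=
      (prod_Icc_add_one_add_one x j 1 _).symm
    have hum : u (j + ((q + 1 + 1 : ℕ) : ℤ)) = u m := by
      simp only [m]; congr 1; push_cast; ring
    have ht₁ : tpoly (· + ·) u x (q + 1) (j + 1) = u m * tpoly (· + ·) u x q (j + 1) + Y := by
      rw [tpoly_succ, hY_shift, ← hum]; congr 3; push_cast; ring
    have ht₂ : tpoly (· + ·) u x (q + 1 + 1) j =
        u m * tpoly (· + ·) u x (q + 1) j + x (j + 1) * Y := by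
      rw [tpoly_succ, prod_Icc_one_succ, hY_shift, hum]
    rw [hm, hY_succ, ht₁, ht₂]
    set A := tpoly (· + ·) u x q (j + 1)
    set B := tpoly (· + ·) u x (q + 1) j
    calc T (m + 1) * (Y * x (m + 1)) + u j * T j * (u m * A + Y)
        = Y * (x (m + 1) * T (m + 1) + u j * T j) + u m * (u j * T j * A) := by
          rw [mul_add, mul_add]; ac_rfl
      _ = Y * (u m * T m + x (j + 1) * T (j + 1)) + u m * (u j * T j * A) := by rw [hex]
      _ = u m * (T m * Y + u j * T j * A) + T (j + 1) * (x (j + 1) * Y) := by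
          rw [mul_add, mul_add]; ac_rfl
      _ = T (j + 1) * (u m * B + x (j + 1) * Y) := by rw [ih, mul_add]; ac_rfl

/-- Lemma (g): `t_{n-1,j+q+1} · x_{j+2} x_{j+3} ⋯ x_{j+q+1} + u_j t_{n-1,j} t_{q-1,j+1}
= t_{n-1,j+1} t_{q,j}` for every positive integer `q`. -/
theorem tpoly_pluecker (n : ℕ) (hn : 0 < n) (add : K → K → K)
    (hadd_assoc : ∀ a b c : K, add (add a b) c = add a (add b c))
    (hadd_comm : ∀ a b : K, add a b = add b a)
    (hdistrib : ∀ a b c : K, a * add b c = add (a * b) (a * c))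
    (u x : ℤ → K) (hu : ∀ i : ℤ, u (i + n) = u i) (hx : ∀ i : ℤ, x (i + n) = x i)
    (j : ℤ) (q : ℕ) (hq : 0 < q) :
    add (tpoly add u x (n - 1) (j + q + 1) * ∏ i ∈ Finset.Icc 2 (q + 1), x (j + i))
        (u j * tpoly add u x (n - 1) j * tpoly add u x (q - 1) (j + 1)) =
      tpoly add u x (n - 1) (j + 1) * tpoly add u x q j := by
  let _ : AddCommSemigroup K := { add, add_assoc := hadd_assoc, add_comm := hadd_comm }
  have : LeftDistribClass K := ⟨hdistrib⟩
  obtain ⟨q, rfl⟩ : ∃ p, q = p + 1 := ⟨q - 1, by omega⟩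
  exact tpoly_pluecker_of_periodic hn hu hx j q
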